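/- If G is a connected graph and X ⊆ V(G) is a dual mutual-visibility set (or a total mutual-visibility set) of G, then the induced subgraph G − X is an isometric subgraph of G. -/

import Mathlib

open SimpleGraph

variable {V : Type*}

/-- Vertices `u` and `v` are `X`-visible in `G`: some shortest `u,v`-walk has
no internal vertex in `X`. -/
def XVisible (G : SimpleGraph V) (X : Set V) (u v : V) : Prop :=
  ∃ p : G.Walk u v, p.length = G.dist u v ∧
    ∀ w ∈ p.support, w ≠ u → w ≠ v → w ∉ X

/-- `X` is a mutual-visibility set of `G`. -/
def MutualVis (G : SimpleGraph V) (X : Set V) : Prop :=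
  ∀ ⦃u⦄, u ∈ X → ∀ ⦃v⦄, v ∈ X → XVisible G X u v

/-- `X` is a total mutual-visibility set of `G`. -/
def TotalVis (G : SimpleGraph V) (X : Set V) : Prop :=
  ∀ u v : V, XVisible G X u v

/-- `X` is a dual mutual-visibility set of `G`. -/
def DualVis (G : SimpleGraph V) (X : Set V) : Prop :=
  MutualVis G X ∧ ∀ ⦃u⦄, u ∉ X → ∀ ⦃v⦄, v ∉ X → XVisible G X u v

/-- `X` is an outer mutual-visibility set of `G`. -/
def OuterVis (G : SimpleGraph V) (X : Set V) : Prop :=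
  MutualVis G X ∧ ∀ ⦃u⦄, u ∈ X → ∀ ⦃v⦄, v ∉ X → XVisible G X u v

/-- `S` induces a convex subgraph of `G`. -/
def IsConvexSet (G : SimpleGraph V) (S : Set V) : Prop :=
  ∀ u ∈ S, ∀ v ∈ S, ∀ p : G.Walk u v, p.length = G.dist u v →
    ∀ w ∈ p.support, w ∈ S

/-- The cycle graph on `ZMod n`. -/
def cyc (n : ℕ) : SimpleGraph (ZMod n) :=
  SimpleGraph.fromRel (fun u v => u - v = 1)

namespace SimpleGraph

variable {W : Type*} {G : SimpleGraph V} {G' : SimpleGraph W}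

theorem Hom.dist_map_le_of_reachable (f : G →g G') {u v : V} (h : G.Reachable u v) :
    G'.dist (f u) (f v) ≤ G.dist u v := by
  obtain ⟨p, hp⟩ := h.exists_walk_length_eq_dist
  simpa [hp] using dist_le (p.map f)

@[simp]
theorem Walk.length_induce {s : Set V} {u v : V} (p : G.Walk u v) (hs : ∀ w ∈ p.support, w ∈ s) :
    (p.induce s hs).length = p.length := by
  conv_rhs => rw [← p.map_induce hs]
  exact (Walk.length_map _ _).symm

theorem Walk.dist_induce_eq_of_length_eq_dist {s : Set V} {u v : s} (p : G.Walk u v)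
    (hp : p.length = G.dist u v) (hs : ∀ w ∈ p.support, w ∈ s) :
    (G.induce s).dist u v = G.dist u v := by
  refine le_antisymm ?_ ?_
  · simpa [hp] using dist_le (p.induce s hs)
  · exact (Embedding.induce s).toHom.dist_map_le_of_reachable ⟨p.induce s hs⟩

end SimpleGraph

theorem XVisible.exists_walk_support_subset_compl {G : SimpleGraph V} {X : Set V} {u v : V}
    (h : XVisible G X u v) (hu : u ∉ X) (hv : v ∉ X) :
    ∃ p : G.Walk u v, p.length = G.dist u v ∧ ∀ w ∈ p.support, w ∈ Xᶜ := by
  obtain ⟨p, hp, hint⟩ := h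
  refine ⟨p, hp, fun w hw => ?_⟩
  by_cases hwu : w = u
  · exact hwu ▸ hu
  by_cases hwv : w = v
  · exact hwv ▸ hv
  exact hint w hw hwu hwv

theorem stmt_8_general (G : SimpleGraph V) (X : Set V)
    (hX : DualVis G X ∨ TotalVis G X) :
    ∀ u v : (Xᶜ : Set V),
      (G.induce (Xᶜ : Set V)).dist u v = G.dist (u : V) (v : V) := by
  intro u v
  have hvis : XVisible G X u v := by
    rcases hX with ⟨_, hdual⟩ | htotal
    · exact hdual u.2 v.2
    · exact htotal u v
  obtain ⟨p, hp, hs⟩ := hvis.exists_walk_support_subset_compl u.2 v.2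
  exact p.dist_induce_eq_of_length_eq_dist hp hs

theorem stmt_8 (G : SimpleGraph V) (hG : G.Connected) (X : Set V)
    (hX : DualVis G X ∨ TotalVis G X) :
    ∀ u v : (Xᶜ : Set V),
      (G.induce (Xᶜ : Set V)).dist u v = G.dist (u : V) (v : V) :=
  stmt_8_general G X hX
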